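/- arXiv:2010.07728 — 4 statements merged into one kernel-verified Lean document; each statement's English description precedes it below -/
import Mathlib

section
/- Let J ∈ Sp(2n, ℝ) be a matrix with J² = -𝟙 such that Ω₀J is positive definite, where Ω₀ is the standard symplectic matrix. Then there exists P ∈ Sp(2n, ℝ) conjugating J to -Ω₀; in fact P = (Ω₀J)^{1/2} satisfies P J P⁻¹ = -Ω₀. -/
open Matrix

/-- The standard symplectic matrix Ω₀ = ((0, 1), (-1, 0)). -/
noncomputable def Omega0 (n : ℕ) : Matrix (Fin n ⊕ Fin n) (Fin n ⊕ Fin n) ℝ :=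
  Matrix.fromBlocks 0 1 (-1) 0

/-- The square root of a positive semidefinite matrix, as defined in Mathlib of December 2024
(removed since), specialised to real matrices (the only case used here). -/
noncomputable def Matrix.PosSemidef.sqrt {n : Type*} [Fintype n] [DecidableEq n]
    {A : Matrix n n ℝ} (hA : Matrix.PosSemidef A) : Matrix n n ℝ :=
  hA.1.eigenvectorUnitary.1 * diagonal ((↑) ∘ (√·) ∘ hA.1.eigenvalues) *
  (star hA.1.eigenvectorUnitary : Matrix n n ℝ)


/-!
Put `M = Ω₀ J` and `P = M^{1/2}`. Since `Ω₀² = J² = -1` and `Ω₀ᵀ = -Ω₀`, conjugating `M` by the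
orthogonal matrix `Ω₀` inverts it: `Ω₀ᵀ M Ω₀ = J Ω₀ = M⁻¹`. So `Ω₀ᵀ P Ω₀` and `P⁻¹` are positive
semidefinite square roots of the same matrix `M⁻¹`, hence equal. Rearranged, this says
`P Ω₀ P = Ω₀`, i.e. the symmetric matrix `P` is symplectic, and `J = -Ω₀ P²` then gives
`P J P⁻¹ = -P Ω₀ P = -Ω₀`.
-/

namespace Matrix.PosSemidef

variable {ι : Type*} [Fintype ι] [DecidableEq ι]

lemma posSemidef_sqrt {A : Matrix ι ι ℝ} (hA : A.PosSemidef) : hA.sqrt.PosSemidef := by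
  have hD : (diagonal ((↑) ∘ (√·) ∘ hA.1.eigenvalues) : Matrix ι ι ℝ).PosSemidef :=
    .diagonal fun i => by simp [Real.sqrt_nonneg]
  unfold sqrt
  simpa [Unitary.coe_star, star_eq_conjTranspose] using
    hD.mul_mul_conjTranspose_same (hA.1.eigenvectorUnitary : Matrix ι ι ℝ)

lemma sqrt_mul_self {A : Matrix ι ι ℝ} (hA : A.PosSemidef) : hA.sqrt * hA.sqrt = A := by
  have hU : (star hA.1.eigenvectorUnitary : Matrix ι ι ℝ) * hA.1.eigenvectorUnitary.1 = 1 :=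
    Unitary.coe_star_mul_self _
  have hDD : (diagonal ((↑) ∘ (√·) ∘ hA.1.eigenvalues) : Matrix ι ι ℝ) *
      diagonal ((↑) ∘ (√·) ∘ hA.1.eigenvalues) = diagonal (RCLike.ofReal ∘ hA.1.eigenvalues) := by
    rw [diagonal_mul_diagonal]
    congr 1
    ext i
    simp [Real.mul_self_sqrt (hA.eigenvalues_nonneg i)]
  calc hA.sqrt * hA.sqrt
        = hA.1.eigenvectorUnitary.1 * (diagonal ((↑) ∘ (√·) ∘ hA.1.eigenvalues) *
          ((star hA.1.eigenvectorUnitary : Matrix ι ι ℝ) * hA.1.eigenvectorUnitary.1) *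
          diagonal ((↑) ∘ (√·) ∘ hA.1.eigenvalues)) *
          (star hA.1.eigenvectorUnitary : Matrix ι ι ℝ) := by simp only [sqrt, mul_assoc]
    _ = hA.1.eigenvectorUnitary.1 * diagonal (RCLike.ofReal ∘ hA.1.eigenvalues) *
          (star hA.1.eigenvectorUnitary : Matrix ι ι ℝ) := by rw [hU, mul_one, hDD]
    _ = A := hA.1.spectral_theorem.symm

lemma transpose_sqrt {A : Matrix ι ι ℝ} (hA : A.PosSemidef) : hA.sqrtᵀ = hA.sqrt := by
  rw [← conjTranspose_eq_transpose_of_trivial]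
  exact hA.posSemidef_sqrt.isHermitian

open scoped MatrixOrder in
lemma eq_of_mul_self_eq_mul_self {A B : Matrix ι ι ℝ} (hA : A.PosSemidef) (hB : B.PosSemidef)
    (h : A * A = B * B) : A = B :=
  (CFC.sq_eq_sq_iff A B hA.nonneg hB.nonneg).mp (by rw [sq, sq, h])

lemma mul_eq_one_of_mul_self_mul_mul_self_eq_one {A B : Matrix ι ι ℝ} (hA : A.PosSemidef)
    (hB : B.PosSemidef) (h : A * A * (B * B) = 1) : A * B = 1 := by
  have hBunit : IsUnit B.det := isUnit_det_of_left_inverse (B := A * A * B) <| by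
    rw [mul_assoc, h]
  have hAB : A = B⁻¹ :=
    hA.eq_of_mul_self_eq_mul_self hB.inv <| by rw [← mul_inv_rev, inv_eq_left_inv h]
  rw [hAB, nonsing_inv_mul B hBunit]

variable {Ω J : Matrix ι ι ℝ}

lemma transpose_mul_sqrt_mul_mul_sqrt (hΩ : Ω * Ω = -1) (hΩT : Ωᵀ = -Ω) (hJ : J * J = -1)
    (h : (Ω * J).PosSemidef) : Ωᵀ * h.sqrt * Ω * h.sqrt = 1 := by
  have hΩΩT : Ω * Ωᵀ = 1 := by rw [hΩT, mul_neg, hΩ, neg_neg]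
  have hΩTΩ : Ωᵀ * Ω = 1 := by rw [hΩT, neg_mul, hΩ, neg_neg]
  have hconj : (Ωᵀ * h.sqrt * Ω).PosSemidef := by
    simpa [conjTranspose_eq_transpose_of_trivial] using
      h.posSemidef_sqrt.conjTranspose_mul_mul_same Ω
  refine hconj.mul_eq_one_of_mul_self_mul_mul_self_eq_one h.posSemidef_sqrt ?_
  calc Ωᵀ * h.sqrt * Ω * (Ωᵀ * h.sqrt * Ω) * (h.sqrt * h.sqrt)
        = Ωᵀ * (h.sqrt * h.sqrt) * Ω * (h.sqrt * h.sqrt) := by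
          simp only [mul_assoc]
          rw [← mul_assoc Ω Ωᵀ, hΩΩT, one_mul]
    _ = Ωᵀ * Ω * (J * (Ω * Ω) * J) := by simp only [h.sqrt_mul_self, mul_assoc]
    _ = 1 := by rw [hΩTΩ, hΩ, mul_neg_one, neg_mul, hJ, neg_neg, one_mul]

lemma sqrt_mul_mul_sqrt (hΩ : Ω * Ω = -1) (hΩT : Ωᵀ = -Ω) (hJ : J * J = -1)
    (h : (Ω * J).PosSemidef) : h.sqrt * Ω * h.sqrt = Ω := by
  have hΩΩT : Ω * Ωᵀ = 1 := by rw [hΩT, mul_neg, hΩ, neg_neg]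
  calc h.sqrt * Ω * h.sqrt = Ω * (Ωᵀ * h.sqrt * Ω * h.sqrt) := by
        simp only [← mul_assoc, hΩΩT, one_mul]
    _ = Ω := by rw [transpose_mul_sqrt_mul_mul_sqrt hΩ hΩT hJ h, mul_one]

lemma sqrt_mul_mul_inv_sqrt (hΩ : Ω * Ω = -1) (hΩT : Ωᵀ = -Ω) (hJ : J * J = -1)
    (h : (Ω * J).PosSemidef) : h.sqrt * J * h.sqrt⁻¹ = -Ω := by
  have hleft := transpose_mul_sqrt_mul_mul_sqrt hΩ hΩT hJ h
  have hPJ : h.sqrt * J = -(h.sqrt * Ω * (h.sqrt * h.sqrt)) := by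
    rw [h.sqrt_mul_self, mul_assoc, ← mul_assoc Ω, hΩ, neg_one_mul, mul_neg, neg_neg]
  calc h.sqrt * J * h.sqrt⁻¹ = -(h.sqrt * Ω * h.sqrt * (h.sqrt * (Ωᵀ * h.sqrt * Ω))) := by
        rw [inv_eq_left_inv hleft, hPJ]
        simp only [neg_mul, mul_assoc]
    _ = -Ω := by rw [sqrt_mul_mul_sqrt hΩ hΩT hJ h, mul_eq_one_comm.mp hleft, mul_one]

end Matrix.PosSemidef

lemma Omega0_mul_self (n : ℕ) : Omega0 n * Omega0 n = -1 := by
  simp [Omega0, fromBlocks_multiply, ← fromBlocks_one, fromBlocks_neg]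

lemma transpose_Omega0 (n : ℕ) : (Omega0 n)ᵀ = -Omega0 n := by
  simp [Omega0, fromBlocks_transpose, fromBlocks_neg]

theorem stmt0_general (n : ℕ) (J : Matrix (Fin n ⊕ Fin n) (Fin n ⊕ Fin n) ℝ)
    (hJ2 : J * J = -1)
    (hpos : (Omega0 n * J).PosDef) :
    ∃ P : Matrix (Fin n ⊕ Fin n) (Fin n ⊕ Fin n) ℝ,
      P = hpos.posSemidef.sqrt ∧
      Pᵀ * Omega0 n * P = Omega0 n ∧
      P * J * P⁻¹ = -(Omega0 n) := by
  have hΩ := Omega0_mul_self n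
  have hΩT := transpose_Omega0 n
  refine ⟨_, rfl, ?_, hpos.posSemidef.sqrt_mul_mul_inv_sqrt hΩ hΩT hJ2⟩
  rw [hpos.posSemidef.transpose_sqrt]
  exact hpos.posSemidef.sqrt_mul_mul_sqrt hΩ hΩT hJ2

/-- If J ∈ Sp(2n,ℝ), J² = -1 and Ω₀J is positive definite, then
P = (Ω₀J)^{1/2} is symplectic and conjugates J to -Ω₀. -/
theorem stmt0 (n : ℕ) (J : Matrix (Fin n ⊕ Fin n) (Fin n ⊕ Fin n) ℝ)
    (hsymp : Jᵀ * Omega0 n * J = Omega0 n) (hJ2 : J * J = -1)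
    (hpos : (Omega0 n * J).PosDef) :
    ∃ P : Matrix (Fin n ⊕ Fin n) (Fin n ⊕ Fin n) ℝ,
      P = hpos.posSemidef.sqrt ∧
      Pᵀ * Omega0 n * P = Omega0 n ∧
      P * J * P⁻¹ = -(Omega0 n) :=
  stmt0_general n J hJ2 hpos
end

section
/- Let ξ be a complex symmetric 2×2 matrix such that Re(ξ) and Im(ξ) are both (positive or negative) semidefinite, or such that det(ξ) = 0. Then for every real symmetric 2×2 matrix H one has Re Tr(ξ H ξ̄ H) ≥ 0. -/
/-!
Write `ξ = A + iB` with `A`, `B` real symmetric. Then `Re Tr(ξ H ξ̄ H) = Tr(AHAH) + Tr(BHBH)`, and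
for a semidefinite `A = S²` one has `Tr(AHAH) = Tr((SHS)²) ≥ 0` because `SHS` is symmetric.
If instead `det ξ = 0`, the symmetric matrix `ξ` has rank at most one, so `ξ = v vᵀ` over `ℂ`, and
then `Tr(ξ H ξ̄ H) = (vᵀ H v̄)(v̄ᵀ H v) = |vᵀ H v̄|²`.
-/

open Matrix
open scoped MatrixOrder ComplexOrder

namespace Matrix

section PosSemidef

variable {𝕜 n : Type*} [RCLike 𝕜] [Fintype n] {A H : Matrix n n 𝕜}

theorem PosSemidef.trace_mul_mul_mul_nonneg (hA : A.PosSemidef) (hH : H.IsHermitian) :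
    0 ≤ (A * H * A * H).trace := by
  classical
  obtain ⟨S, hS, rfl⟩ : ∃ S : Matrix n n 𝕜, S.IsHermitian ∧ A = S * S :=
    ⟨CFC.sqrt A, (CFC.sqrt_nonneg A).posSemidef.isHermitian,
      (CFC.sqrt_mul_sqrt_self A hA.nonneg).symm⟩
  have hC : (S * H * S)ᴴ = S * H * S := by
    simp only [conjTranspose_mul, hS.eq, hH.eq, Matrix.mul_assoc]
  calc (0 : 𝕜) ≤ ((S * H * S)ᴴ * (S * H * S)).trace :=
        (posSemidef_conjTranspose_mul_self _).trace_nonneg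
    _ = (S * H * S * S * H * S).trace := by rw [hC]; simp only [Matrix.mul_assoc]
    _ = (S * S * H * (S * S) * H).trace := by
        rw [trace_mul_comm]
        simp only [Matrix.mul_assoc]

theorem trace_mul_mul_mul_nonneg_of_posSemidef_or_neg (hA : A.PosSemidef ∨ (-A).PosSemidef)
    (hH : H.IsHermitian) : 0 ≤ (A * H * A * H).trace := by
  rcases hA with hA | hA
  · exact hA.trace_mul_mul_mul_nonneg hH
  · simpa using hA.trace_mul_mul_mul_nonneg hH

end PosSemidef

variable {n : Type*} [Fintype n]

theorem re_trace_mul_map_ofReal_mul_map_conj (ξ : Matrix n n ℂ) (H : Matrix n n ℝ) :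
    (ξ * H.map Complex.ofReal * ξ.map (starRingEnd ℂ) * H.map Complex.ofReal).trace.re =
      (ξ.map Complex.re * H * ξ.map Complex.re * H).trace +
        (ξ.map Complex.im * H * ξ.map Complex.im * H).trace := by
  set A := ξ.map Complex.re
  set B := ξ.map Complex.im
  have hξ : ξ = A.map Complex.ofRealHom + Complex.I • B.map Complex.ofRealHom := by
    ext i j; apply Complex.ext <;> simp [A, B]
  have hξc : ξ.map (starRingEnd ℂ) =
      A.map Complex.ofRealHom - Complex.I • B.map Complex.ofRealHom := by
    ext i j; apply Complex.ext <;> simp [A, B]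
  have hH : H.map Complex.ofReal = H.map Complex.ofRealHom := rfl
  rw [hξc, hH, hξ]
  simp only [add_mul, sub_mul, mul_sub, smul_mul_assoc, mul_smul_comm, ← Matrix.map_mul,
    trace_add, trace_sub, trace_smul, ← AddMonoidHom.map_trace]
  simp

theorem re_trace_vecMulVec_mul_map_conj_nonneg (v : n → ℂ) (H : Matrix n n ℝ) :
    0 ≤ (vecMulVec v v * H.map Complex.ofReal * (vecMulVec v v).map (starRingEnd ℂ) *
      H.map Complex.ofReal).trace.re := by
  set M := H.map Complex.ofReal
  set z := v ᵥ* M ⬝ᵥ star v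
  have hconj : (vecMulVec v v).map (starRingEnd ℂ) = vecMulVec (star v) (star v) := by
    ext i j; simp [vecMulVec_apply]
  have hz : v ⬝ᵥ (star v ᵥ* M) = starRingEnd ℂ z := by
    simp [z, M, dotProduct, vecMul, map_sum, Finset.mul_sum, mul_comm]
  rw [hconj, vecMulVec_mul, vecMulVec_mul_vecMulVec, vecMulVec_mul, trace_vecMulVec, smul_vecMul,
    dotProduct_smul, hz, smul_eq_mul, Complex.mul_conj, Complex.ofReal_re]
  exact Complex.normSq_nonneg z

theorem exists_eq_vecMulVec_self_of_det_eq_zero {K : Type*} [Field K] [IsAlgClosed K]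
    {ξ : Matrix (Fin 2) (Fin 2) K} (hξ : ξᵀ = ξ) (hdet : ξ.det = 0) :
    ∃ v : Fin 2 → K, ξ = vecMulVec v v := by
  have h10 : ξ 1 0 = ξ 0 1 := congrFun (congrFun hξ 0) 1
  rw [det_fin_two, h10] at hdet
  obtain ⟨s, hs⟩ := IsAlgClosed.exists_eq_mul_self (ξ 0 0)
  by_cases hs0 : s = 0
  · obtain ⟨t, ht⟩ := IsAlgClosed.exists_eq_mul_self (ξ 1 1)
    have h01 : ξ 0 1 = 0 := by
      rwa [hs, hs0, zero_mul, zero_mul, zero_sub, neg_eq_zero, mul_self_eq_zero] at hdet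
    refine ⟨![0, t], ?_⟩
    ext i j; fin_cases i <;> fin_cases j <;> simp [vecMulVec_apply, hs, hs0, h01, h10, ht]
  · refine ⟨![s, ξ 0 1 / s], ?_⟩
    ext i j; fin_cases i <;> fin_cases j <;> simp [vecMulVec_apply, hs, h10]
    · field_simp
    · field_simp
    · field_simp
      linear_combination -(ξ 1 1) * hs + hdet

end Matrix

/-- For a complex symmetric 2×2 matrix ξ with Re(ξ) and Im(ξ) both (positive or
negative) semidefinite, or with det(ξ) = 0, and any real symmetric 2×2 matrix H,
one has Re Tr(ξ H ξ̄ H) ≥ 0. -/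
theorem stmt17 (ξ : Matrix (Fin 2) (Fin 2) ℂ) (hξ : ξᵀ = ξ)
    (hyp : (((ξ.map Complex.re).PosSemidef ∨ (-(ξ.map Complex.re)).PosSemidef) ∧
            ((ξ.map Complex.im).PosSemidef ∨ (-(ξ.map Complex.im)).PosSemidef)) ∨
           ξ.det = 0)
    (H : Matrix (Fin 2) (Fin 2) ℝ) (hH : Hᵀ = H) :
    0 ≤ ((ξ * H.map Complex.ofReal * ξ.map (starRingEnd ℂ) * H.map Complex.ofReal).trace).re := by
  rcases hyp with ⟨hre, him⟩ | hdet
  · have hH' : H.IsHermitian := isHermitian_iff_isSymm.mpr hH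
    rw [re_trace_mul_map_ofReal_mul_map_conj]
    exact add_nonneg (trace_mul_mul_mul_nonneg_of_posSemidef_or_neg hre hH')
      (trace_mul_mul_mul_nonneg_of_posSemidef_or_neg him hH')
  · obtain ⟨v, rfl⟩ := exists_eq_vecMulVec_self_of_det_eq_zero hξ hdet
    exact re_trace_vecMulVec_mul_map_conj_nonneg v H
end

section
/- Define R(δ⁺, δ⁻) for 0 ≤ δ⁻ ≤ δ⁺ with δ⁺ + δ⁻ < 1 via its partial derivative -D₂R·δ⁺δ⁻ = δ⁺δ⁻ / (2(√(1-δ⁺)+√(1-δ⁻))(1+√(1-δ⁺))(1+√(1-δ⁻))). Then whenever δ⁺ + δ⁻ < 1 one has the strict bound δ⁺δ⁻ / (2(√(1-δ⁺)+√(1-δ⁻))(1+√(1-δ⁺))(1+√(1-δ⁻))) < 1/6. -/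
/-!
With `a = √(1 - δ⁺)` and `b = √(1 - δ⁻)` one has `δ⁺ = (1 - a)(1 + a)` and `δ⁻ = (1 - b)(1 + b)`,
so the quantity equals `(1 - a)(1 - b) / (2(a + b))`. Here `a, b ∈ [0, 1]` and `a² + b² > 1`;
for `s = a + b` this gives `2ab < s² - 1`, hence `(1 - a)(1 - b) < (s - 1)² / 2 ≤ s / 3` on `1 < s ≤ 2`.
-/

open Real

lemma one_sub_sqrt_one_sub_mul_one_add {x : ℝ} (hx : x ≤ 1) :
    (1 - √(1 - x)) * (1 + √(1 - x)) = x := by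
  nlinarith [sq_sqrt (sub_nonneg.mpr hx)]

lemma three_mul_one_sub_mul_one_sub_lt_add {a b : ℝ} (ha₀ : 0 ≤ a) (ha₁ : a ≤ 1)
    (hb₀ : 0 ≤ b) (hb₁ : b ≤ 1) (hab : 1 < a ^ 2 + b ^ 2) :
    3 * ((1 - a) * (1 - b)) < a + b := by
  have hs : 1 < a + b := by nlinarith
  have hprod : 2 * (a * b) < (a + b) ^ 2 - 1 := by nlinarith
  nlinarith

lemma mul_div_eq_one_sub_sqrt_mul_one_sub_sqrt_div {x y : ℝ} (hx : x ≤ 1) (hy : y ≤ 1)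
    (hxy : 0 < √(1 - x) + √(1 - y)) :
    x * y / (2 * (√(1 - x) + √(1 - y)) * (1 + √(1 - x)) * (1 + √(1 - y))) =
      (1 - √(1 - x)) * (1 - √(1 - y)) / (2 * (√(1 - x) + √(1 - y))) := by
  have hx' := one_sub_sqrt_one_sub_mul_one_add hx
  have hy' := one_sub_sqrt_one_sub_mul_one_add hy
  set a := √(1 - x)
  set b := √(1 - y)
  have ha : 0 < 1 + a := by positivity
  have hb : 0 < 1 + b := by positivity
  rw [← hx', ← hy']
  field_simp

/-- For 0 ≤ δ⁻ ≤ δ⁺ with δ⁺ + δ⁻ < 1: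
δ⁺δ⁻ / (2(√(1-δ⁺)+√(1-δ⁻))(1+√(1-δ⁺))(1+√(1-δ⁻))) < 1/6. -/
theorem stmt18 (dp dm : ℝ) (h1 : 0 ≤ dm) (h2 : dm ≤ dp) (h3 : dp + dm < 1) :
    dp * dm / (2 * (Real.sqrt (1 - dp) + Real.sqrt (1 - dm)) *
      (1 + Real.sqrt (1 - dp)) * (1 + Real.sqrt (1 - dm))) < 1 / 6 := by
  have hdp : dp < 1 := by linarith
  have hdm : dm < 1 := by linarith
  have hsq : 1 < √(1 - dp) ^ 2 + √(1 - dm) ^ 2 := by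
    rw [sq_sqrt (by linarith), sq_sqrt (by linarith)]
    linarith
  have key := three_mul_one_sub_mul_one_sub_lt_add (sqrt_nonneg _)
    (sqrt_le_one.mpr (by linarith)) (sqrt_nonneg _) (sqrt_le_one.mpr (by linarith)) hsq
  have hpos : 0 < √(1 - dp) + √(1 - dm) :=
    add_pos_of_pos_of_nonneg (sqrt_pos.mpr (by linarith)) (sqrt_nonneg _)
  rw [mul_div_eq_one_sub_sqrt_mul_one_sub_sqrt_div hdp.le hdm.le hpos, div_lt_iff₀ (by positivity)]
  linarith
end

section
/- Let G be a real symmetric positive-definite n×n matrix and Φ a complex symmetric n×n matrix such that all eigenvalues of G⁻¹ Φ G⁻¹ Φ̄ have modulus less than 1. Then the matrix (1 - G⁻¹ Φ G⁻¹ Φ̄)^{1/2} G⁻¹ is Hermitian and positive-definite, where the square root is defined via the similarity (1 - G⁻¹ Φ G⁻¹ Φ̄) = S⁻¹(1 - R R̄)S with R = Λ^{1/2} S Φ Sᵀ Λ^{1/2} for G⁻¹ = Sᵀ Λ S an orthogonal diagonalization. -/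
/-!
Write `G⁻¹ = Bᵀ B` with the real invertible matrix `B = Λ^{1/2} S`, so that `B G Bᵀ = 1`,
`R = B Φ Bᵀ` and `R̄ = B Φ̄ Bᵀ`. Then `G⁻¹ Φ G⁻¹ Φ̄ = Bᵀ (R R̄) (Bᵀ)⁻¹`, so the Hermitian matrix
`R R̄ = R Rᴴ` has its spectrum in the open unit disc and `1 - R R̄` is positive definite. Its
square root `T` is positive definite, hence so is the congruent matrix `Bᵀ T B`, and
`(Bᵀ T B G)² = Bᵀ (1 - R R̄) B G = 1 - G⁻¹ Φ G⁻¹ Φ̄`.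
-/

open Matrix
open scoped ComplexOrder MatrixOrder

section

variable {ι : Type*}

theorem conjTranspose_eq_transpose_of_map_conj {B : Matrix ι ι ℂ}
    (hB : B.map (starRingEnd ℂ) = B) : Bᴴ = Bᵀ := by
  rw [conjTranspose, transpose_map]
  exact congrArg transpose hB

theorem map_conj_map_ofReal {m : Type*} (B : Matrix ι m ℝ) :
    (B.map Complex.ofReal).map (starRingEnd ℂ) = B.map Complex.ofReal := by
  simp [Matrix.map_map, Function.comp_def]

variable [Fintype ι]

theorem map_conj_mul_mul_transpose {B : Matrix ι ι ℂ} (hB : B.map (starRingEnd ℂ) = B)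
    (Φ : Matrix ι ι ℂ) :
    (B * Φ * Bᵀ).map (starRingEnd ℂ) = B * Φ.map (starRingEnd ℂ) * Bᵀ := by
  simp only [Matrix.map_mul, transpose_map, hB]

theorem isHermitian_mul_map_conj_of_transpose_eq {R : Matrix ι ι ℂ} (hR : Rᵀ = R) :
    (R * R.map (starRingEnd ℂ)).IsHermitian := by
  have : R.map (starRingEnd ℂ) = Rᴴ := by
    rw [conjTranspose, hR]; rfl
  exact this ▸ isHermitian_mul_conjTranspose_self R

variable [DecidableEq ι]

theorem map_ofReal_mul_mul_transpose_eq_one {B G : Matrix ι ι ℝ} (h : B * G * Bᵀ = 1) :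
    B.map Complex.ofReal * G.map Complex.ofReal * (B.map Complex.ofReal)ᵀ = 1 := by
  have := congrArg Complex.ofRealHom.mapMatrix h
  simp only [map_mul, map_one, RingHom.mapMatrix_apply, transpose_map] at this
  exact this

theorem mul_mul_transpose_eq_one_of_inv_eq {R : Type*} [CommRing R] {B G : Matrix ι ι R}
    (hG : IsUnit G) (h : G⁻¹ = Bᵀ * B) : B * G * Bᵀ = 1 :=
  mul_eq_one_comm.mp <| by rw [← mul_assoc, ← h, nonsing_inv_mul _ ((isUnit_iff_isUnit_det _).mp hG)]

theorem diagonal_sqrt_mul_mul_transpose_eq_one {G S : Matrix ι ι ℝ} {d : ι → ℝ} (hG : IsUnit G)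
    (hd : ∀ i, 0 ≤ d i) (hdiag : G⁻¹ = Sᵀ * diagonal d * S) :
    diagonal (fun i => √(d i)) * S * G * (diagonal (fun i => √(d i)) * S)ᵀ = 1 := by
  refine mul_mul_transpose_eq_one_of_inv_eq hG ?_
  have : diagonal d = diagonal (fun i => √(d i)) * diagonal (fun i => √(d i)) := by
    rw [diagonal_mul_diagonal]
    exact congrArg diagonal (funext fun i => (Real.mul_self_sqrt (hd i)).symm)
  rw [hdiag, this]
  simp only [transpose_mul, diagonal_transpose, mul_assoc]

theorem posDef_one_sub_of_spectrum_norm_lt_one {A : Matrix ι ι ℂ} (hA : A.IsHermitian)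
    (h : ∀ μ ∈ spectrum ℂ A, ‖μ‖ < 1) : (1 - A).PosDef := by
  refine IsStrictlyPositive.posDef <|
    (StarOrderedRing.isStrictlyPositive_iff_spectrum_pos (R := ℝ) _ (isHermitian_one.sub hA)).mpr ?_
  rw [← map_one (algebraMap ℝ (Matrix ι ι ℂ)), ← spectrum.singleton_sub_eq]
  rintro _ ⟨_, rfl, x, hx, rfl⟩
  have hx1 : |x| < 1 := by simpa using h x ((spectrum.algebraMap_mem_iff ℂ).mpr hx)
  linarith [le_abs_self x]

theorem Matrix.PosDef.exists_posDef_mul_self_eq {𝕜 : Type*} [RCLike 𝕜] {A : Matrix ι ι 𝕜}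
    (hA : A.PosDef) : ∃ T : Matrix ι ι 𝕜, T.PosDef ∧ T * T = A :=
  ⟨CFC.sqrt A, hA.isStrictlyPositive.sqrt.posDef, CFC.sqrt_mul_sqrt_self A hA.posSemidef.nonneg⟩

section Congruence

variable {B G : Matrix ι ι ℂ}

theorem transpose_mul_mul_eq_one_comm (hBG : B * G * Bᵀ = 1) : Bᵀ * B * G = 1 := by
  rw [mul_assoc]; exact mul_eq_one_comm.mp hBG

theorem inv_eq_transpose_mul_of_mul_mul_transpose_eq_one (hBG : B * G * Bᵀ = 1) :
    G⁻¹ = Bᵀ * B :=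
  inv_eq_left_inv (transpose_mul_mul_eq_one_comm hBG)

theorem spectrum_inv_mul_inv_mul_map_conj_eq (hBG : B * G * Bᵀ = 1)
    (hB : B.map (starRingEnd ℂ) = B) (Φ : Matrix ι ι ℂ) :
    spectrum ℂ (G⁻¹ * Φ * G⁻¹ * Φ.map (starRingEnd ℂ)) =
      spectrum ℂ (B * Φ * Bᵀ * (B * Φ * Bᵀ).map (starRingEnd ℂ)) := by
  let u : (Matrix ι ι ℂ)ˣ :=
    ⟨Bᵀ, B * G, by rw [← mul_assoc, transpose_mul_mul_eq_one_comm hBG], hBG⟩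
  have : G⁻¹ * Φ * G⁻¹ * Φ.map (starRingEnd ℂ) =
      u * (B * Φ * Bᵀ * (B * Φ * Bᵀ).map (starRingEnd ℂ)) * (u⁻¹ : (Matrix ι ι ℂ)ˣ) := by
    rw [map_conj_mul_mul_transpose hB, inv_eq_transpose_mul_of_mul_mul_transpose_eq_one hBG]
    simp only [u, Units.inv_mk, mul_assoc]
    rw [← mul_assoc Bᵀ B G, transpose_mul_mul_eq_one_comm hBG, mul_one]
  rw [this, spectrum.units_conjugate]

theorem posDef_transpose_mul_mul (hBG : B * G * Bᵀ = 1) (hB : B.map (starRingEnd ℂ) = B)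
    {T : Matrix ι ι ℂ} (hT : T.PosDef) : (Bᵀ * T * B).PosDef := by
  rw [← conjTranspose_eq_transpose_of_map_conj hB]
  refine hT.conjTranspose_mul_mul_same (mulVec_injective_iff_isUnit.mpr ?_)
  exact IsUnit.of_mul_eq_one (G * Bᵀ) (by rw [← mul_assoc, hBG])

theorem transpose_mul_mul_mul_self_eq_one_sub (hBG : B * G * Bᵀ = 1)
    (hB : B.map (starRingEnd ℂ) = B) {Φ T : Matrix ι ι ℂ}
    (hT : T * T = 1 - B * Φ * Bᵀ * (B * Φ * Bᵀ).map (starRingEnd ℂ)) :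
    Bᵀ * T * B * G * (Bᵀ * T * B) * G = 1 - G⁻¹ * Φ * G⁻¹ * Φ.map (starRingEnd ℂ) := by
  rw [map_conj_mul_mul_transpose hB] at hT
  calc Bᵀ * T * B * G * (Bᵀ * T * B) * G = Bᵀ * (T * (B * G * Bᵀ) * T) * B * G := by
        simp only [mul_assoc]
    _ = Bᵀ * B * G - Bᵀ * B * Φ * (Bᵀ * B) * Φ.map (starRingEnd ℂ) * (Bᵀ * B * G) := by
        rw [hBG, mul_one, hT]; noncomm_ring
    _ = 1 - G⁻¹ * Φ * G⁻¹ * Φ.map (starRingEnd ℂ) := by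
        rw [transpose_mul_mul_eq_one_comm hBG,
          inv_eq_transpose_mul_of_mul_mul_transpose_eq_one hBG, mul_one]

end Congruence

end

theorem stmt19_general (n : ℕ) (G S : Matrix (Fin n) (Fin n) ℝ) (d : Fin n → ℝ)
    (Φ : Matrix (Fin n) (Fin n) ℂ)
    (hG : G.PosDef) (hΦ : Φᵀ = Φ)
    (hd : ∀ i, 0 < d i)
    (hdiag : G⁻¹ = Sᵀ * Matrix.diagonal d * S)
    (hspec : ∀ μ ∈ spectrum ℂ ((G.map Complex.ofReal)⁻¹ * Φ * (G.map Complex.ofReal)⁻¹ *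
        Φ.map (starRingEnd ℂ)), ‖μ‖ < 1) :
    let Sc : Matrix (Fin n) (Fin n) ℂ := S.map Complex.ofReal
    let Λh : Matrix (Fin n) (Fin n) ℂ := Matrix.diagonal fun i => (Real.sqrt (d i) : ℂ)
    let R : Matrix (Fin n) (Fin n) ℂ := Λh * Sc * Φ * Scᵀ * Λh
    (1 - R * R.map (starRingEnd ℂ)).IsHermitian ∧
    ∃ T : Matrix (Fin n) (Fin n) ℂ, T.PosDef ∧
      T * T = 1 - R * R.map (starRingEnd ℂ) ∧
      (Scᵀ * Λh * T * Λh * Sc).PosDef ∧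
      (Scᵀ * Λh * T * Λh * Sc) * G.map Complex.ofReal *
          (Scᵀ * Λh * T * Λh * Sc) * G.map Complex.ofReal
        = 1 - (G.map Complex.ofReal)⁻¹ * Φ * (G.map Complex.ofReal)⁻¹ *
            Φ.map (starRingEnd ℂ) := by
  intro Sc Λh R
  obtain ⟨B, hB_def, hBG, hB⟩ : ∃ B : Matrix (Fin n) (Fin n) ℂ, B = Λh * Sc ∧
      B * G.map Complex.ofReal * Bᵀ = 1 ∧ B.map (starRingEnd ℂ) = B :=
    ⟨_, (Matrix.map_mul (f := Complex.ofRealHom)).trans (by rw [diagonal_map (by simp)]; rfl),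
      map_ofReal_mul_mul_transpose_eq_one <|
        diagonal_sqrt_mul_mul_transpose_eq_one hG.isUnit (fun i => (hd i).le) hdiag,
      map_conj_map_ofReal _⟩
  have hΛh : Λhᵀ = Λh := diagonal_transpose _
  have hR : R = B * Φ * Bᵀ := by
    rw [hB_def, transpose_mul, hΛh]; simp only [R, mul_assoc]
  have hRR : (1 - R * R.map (starRingEnd ℂ)).PosDef := by
    refine posDef_one_sub_of_spectrum_norm_lt_one
      (isHermitian_mul_map_conj_of_transpose_eq ?_) ?_
    · rw [hR, transpose_mul, transpose_mul, transpose_transpose, hΦ, mul_assoc]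
    · rwa [hR, ← spectrum_inv_mul_inv_mul_map_conj_eq hBG hB]
  obtain ⟨T, hTpos, hT⟩ := hRR.exists_posDef_mul_self_eq
  have hM : Scᵀ * Λh * T * Λh * Sc = Bᵀ * T * B := by
    rw [hB_def, transpose_mul, hΛh]; simp only [mul_assoc]
  refine ⟨hRR.isHermitian, T, hTpos, hT, ?_, ?_⟩
  · rw [hM]
    exact posDef_transpose_mul_mul hBG hB hTpos
  · rw [hM]
    exact transpose_mul_mul_mul_self_eq_one_sub hBG hB (hR ▸ hT)

/-- For G real symmetric positive-definite with orthogonal diagonalization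
G⁻¹ = Sᵀ Λ S (Λ = diag(d), d > 0) and Φ complex symmetric with all eigenvalues of
G⁻¹ Φ G⁻¹ Φ̄ of modulus < 1, setting R = Λ^{1/2} S Φ Sᵀ Λ^{1/2}, the matrix
1 - R R̄ is Hermitian positive-definite, and
(1 - G⁻¹ΦG⁻¹Φ̄)^{1/2} G⁻¹ := Sᵀ Λ^{1/2} (1-RR̄)^{1/2} Λ^{1/2} S is Hermitian
positive-definite and squares (against G) to 1 - G⁻¹ΦG⁻¹Φ̄. -/
theorem stmt19 (n : ℕ) (G S : Matrix (Fin n) (Fin n) ℝ) (d : Fin n → ℝ)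
    (Φ : Matrix (Fin n) (Fin n) ℂ)
    (hG : G.PosDef) (hΦ : Φᵀ = Φ)
    (hS : Sᵀ * S = 1) (hd : ∀ i, 0 < d i)
    (hdiag : G⁻¹ = Sᵀ * Matrix.diagonal d * S)
    (hspec : ∀ μ ∈ spectrum ℂ ((G.map Complex.ofReal)⁻¹ * Φ * (G.map Complex.ofReal)⁻¹ *
        Φ.map (starRingEnd ℂ)), ‖μ‖ < 1) :
    let Sc : Matrix (Fin n) (Fin n) ℂ := S.map Complex.ofReal
    let Λh : Matrix (Fin n) (Fin n) ℂ := Matrix.diagonal fun i => (Real.sqrt (d i) : ℂ)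
    let R : Matrix (Fin n) (Fin n) ℂ := Λh * Sc * Φ * Scᵀ * Λh
    (1 - R * R.map (starRingEnd ℂ)).IsHermitian ∧
    ∃ T : Matrix (Fin n) (Fin n) ℂ, T.PosDef ∧
      T * T = 1 - R * R.map (starRingEnd ℂ) ∧
      (Scᵀ * Λh * T * Λh * Sc).PosDef ∧
      (Scᵀ * Λh * T * Λh * Sc) * G.map Complex.ofReal *
          (Scᵀ * Λh * T * Λh * Sc) * G.map Complex.ofReal
        = 1 - (G.map Complex.ofReal)⁻¹ * Φ * (G.map Complex.ofReal)⁻¹ *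
            Φ.map (starRingEnd ℂ) :=
  stmt19_general n G S d Φ hG hΦ hd hdiag hspec
end
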